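/- Let X be a set equipped with two topologies τ⁺ and τ⁻. If the bitopological space (X, τ⁺, τ⁻) is compact and totally order-separated, then it is zero-dimensional: every τ⁺-open set is a union of sets that are τ⁺-open and τ⁻-closed, and every τ⁻-open set is a union of sets that are τ⁻-open and τ⁺-closed. -/

import Mathlib

open Set Topology

/-- The specialization preorder of a topology: `x ≤ y` iff every open set
containing `x` also contains `y`. -/
def SpecLE {X : Type*} (τ : TopologicalSpace X) (x y : X) : Prop :=
  ∀ U : Set X, IsOpen[τ] U → x ∈ U → y ∈ U

/-- A bitopological space is T0 if for any two distinct points there is a set,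
open in one of the two topologies, containing exactly one of them. -/
def BiT0 {X : Type*} (τp τm : TopologicalSpace X) : Prop :=
  ∀ x y : X, x ≠ y → ∃ U : Set X, (IsOpen[τp] U ∨ IsOpen[τm] U) ∧
    ((x ∈ U ∧ y ∉ U) ∨ (y ∈ U ∧ x ∉ U))

/-- A bitopological space is compact if every cover of `X` by sets, each open in
one of the two topologies, has a finite subcover. -/
def BiCompact {X : Type*} (τp τm : TopologicalSpace X) : Prop :=
  ∀ 𝒰 : Set (Set X), (∀ U ∈ 𝒰, IsOpen[τp] U ∨ IsOpen[τm] U) → ⋃₀ 𝒰 = univ →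
    ∃ ℱ ⊆ 𝒰, ℱ.Finite ∧ ⋃₀ ℱ = univ

/-- A bitopological space is zero-dimensional if every `τp`-open set is a union of
`τp`-open `τm`-closed sets, and symmetrically. -/
def BiZeroDim {X : Type*} (τp τm : TopologicalSpace X) : Prop :=
  (∀ U : Set X, IsOpen[τp] U → ∃ 𝒮 : Set (Set X),
      (∀ V ∈ 𝒮, IsOpen[τp] V ∧ IsClosed[τm] V) ∧ ⋃₀ 𝒮 = U) ∧
  (∀ U : Set X, IsOpen[τm] U → ∃ 𝒮 : Set (Set X),
      (∀ V ∈ 𝒮, IsOpen[τm] V ∧ IsClosed[τp] V) ∧ ⋃₀ 𝒮 = U)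

/-- `x ≤ y` iff `x ≤⁺ y` and `y ≤⁻ x`. -/
def BiLE {X : Type*} (τp τm : TopologicalSpace X) (x y : X) : Prop :=
  SpecLE τp x y ∧ SpecLE τm y x

/-- A bitopological space is totally order-separated if `BiLE` is a partial order and
whenever `¬ x ≤ y` there is a `τp`-open `τm`-closed set containing `x` but not `y`. -/
def TotOrdSep {X : Type*} (τp τm : TopologicalSpace X) : Prop :=
  ((∀ x : X, BiLE τp τm x x) ∧
   (∀ x y z : X, BiLE τp τm x y → BiLE τp τm y z → BiLE τp τm x z) ∧
   (∀ x y : X, BiLE τp τm x y → BiLE τp τm y x → x = y)) ∧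
  (∀ x y : X, ¬ BiLE τp τm x y →
    ∃ U : Set X, IsOpen[τp] U ∧ IsClosed[τm] U ∧ x ∈ U ∧ y ∉ U)

/-! For `x` in a `τ`-open set `U`, total order-separation gives, for each `y ∉ U`, a `τ`-open
`σ`-closed set `W y` containing `x` but not `y`. Since `Uᶜ` is `τ`-closed, bicompactness makes it
`σ`-compact, so finitely many of the `σ`-open sets `(W y)ᶜ` cover it; the intersection of the
corresponding `W y` is then a `τ`-open `σ`-closed neighbourhood of `x` inside `U`. Swapping the two
topologies reverses the order and preserves both hypotheses, which gives the other half. -/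

section

variable {X : Type*} {τ σ : TopologicalSpace X}

theorem BiCompact.symm (hc : BiCompact τ σ) : BiCompact σ τ :=
  fun 𝒰 h𝒰 hcov => hc 𝒰 (fun U hU => (h𝒰 U hU).symm) hcov

theorem biLE_swap {x y : X} : BiLE σ τ x y ↔ BiLE τ σ y x := and_comm

theorem TotOrdSep.symm (hts : TotOrdSep τ σ) : TotOrdSep σ τ := by
  obtain ⟨⟨hrefl, htrans, hanti⟩, hsep⟩ := hts
  refine ⟨⟨fun x => biLE_swap.2 (hrefl x), fun x y z hxy hyz => ?_, fun x y hxy hyx => ?_⟩,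
    fun x y hxy => ?_⟩
  · exact biLE_swap.2 (htrans z y x (biLE_swap.1 hyz) (biLE_swap.1 hxy))
  · exact hanti x y (biLE_swap.1 hyx) (biLE_swap.1 hxy)
  · obtain ⟨W, hWo, hWc, hyW, hxW⟩ := hsep y x (mt biLE_swap.2 hxy)
    exact ⟨Wᶜ, hWc.isOpen_compl, @IsOpen.isClosed_compl X τ _ hWo, hxW, not_not.2 hyW⟩

theorem BiCompact.isCompact_of_isClosed (hc : BiCompact τ σ) {C : Set X} (hC : IsClosed[τ] C) :
    @IsCompact X σ C := by
  refine @isCompact_generateFrom X σ _ (TopologicalSpace.generateFrom_setOfPred_isOpen σ).symm _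
    fun P hP hCP => ?_
  obtain ⟨ℱ, hℱ, hfin, hcov⟩ := hc (insert Cᶜ P)
    (by rintro U (rfl | hU); exacts [.inl hC.isOpen_compl, .inr (hP hU)])
    (by rwa [sUnion_insert, ← compl_subset_iff_union, compl_compl])
  refine ⟨ℱ \ {Cᶜ}, fun F hF => (hℱ hF.1).resolve_left hF.2, hfin.sdiff, fun x hx => ?_⟩
  obtain ⟨F, hF, hxF⟩ := hcov.symm ▸ mem_univ x
  exact ⟨F, ⟨hF, fun hFC => (hFC ▸ hxF) hx⟩, hxF⟩

theorem BiCompact.exists_isOpen_isClosed_mem_subset (hc : BiCompact τ σ) {U : Set X}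
    (hU : IsOpen[τ] U) {x : X}
    (hsep : ∀ y ∉ U, ∃ W : Set X, IsOpen[τ] W ∧ IsClosed[σ] W ∧ x ∈ W ∧ y ∉ W) :
    ∃ V : Set X, IsOpen[τ] V ∧ IsClosed[σ] V ∧ x ∈ V ∧ V ⊆ U := by
  choose! W hWo hWc hxW hyW using hsep
  have hUc : @IsCompact X σ Uᶜ := hc.isCompact_of_isClosed (@IsOpen.isClosed_compl X τ _ hU)
  obtain ⟨t, ht, htfin, hcov⟩ := hUc.elim_finite_subcover_image (c := fun y => (W y)ᶜ)
    (fun y hy => (hWc y hy).isOpen_compl) fun y hy => mem_biUnion hy (hyW y hy)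
  refine ⟨⋂ y ∈ t, W y, @Set.Finite.isOpen_biInter X _ τ _ _ htfin fun y hy => hWo y (ht hy),
    isClosed_biInter fun y hy => hWc y (ht hy), mem_iInter₂.2 fun y hy => hxW y (ht hy), ?_⟩
  rwa [← compl_subset_compl, compl_iInter₂]

theorem BiCompact.exists_sUnion_eq_of_totOrdSep (hc : BiCompact τ σ) (hts : TotOrdSep τ σ)
    {U : Set X} (hU : IsOpen[τ] U) :
    ∃ 𝒮 : Set (Set X), (∀ V ∈ 𝒮, IsOpen[τ] V ∧ IsClosed[σ] V) ∧ ⋃₀ 𝒮 = U := by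
  refine ⟨{V | (IsOpen[τ] V ∧ IsClosed[σ] V) ∧ V ⊆ U}, fun V hV => hV.1,
    (sUnion_subset fun V hV => hV.2).antisymm fun x hx => ?_⟩
  obtain ⟨V, hVo, hVc, hxV, hVU⟩ := hc.exists_isOpen_isClosed_mem_subset hU
    fun y hy => hts.2 x y fun hxy => hy (hxy.1 U hU hx)
  exact ⟨V, ⟨⟨hVo, hVc⟩, hVU⟩, hxV⟩

end

/-- A compact and totally order-separated bitopological space is zero-dimensional. -/
theorem compact_totOrdSep_zeroDim {X : Type*} (τp τm : TopologicalSpace X)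
    (hc : BiCompact τp τm) (hts : TotOrdSep τp τm) :
    BiZeroDim τp τm :=
  ⟨fun _ hU => hc.exists_sUnion_eq_of_totOrdSep hts hU,
    fun _ hU => hc.symm.exists_sUnion_eq_of_totOrdSep hts.symm hU⟩
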